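/- arXiv:1902.10441 — 5 statements merged into one kernel-verified Lean document; each statement's English description precedes it below -/
import Mathlib

section
/- Let d ≥ 1 and work in EuclideanSpace ℝ (Fin d) with standard basis vectors e_i = EuclideanSpace.single i 1. Set α = (1 − √(d+1))/d and define d+1 points w : Fin (d+1) → EuclideanSpace ℝ (Fin d) by w i = e_i for i < d and w_d = α • (Σ_{i : Fin d} e_i). Then the points are mutually equidistant: for all i ≠ j, dist (w i) (w j) = √2. -/
/-!
The standard basis vectors are orthonormal, so any two of them are at distance `√2`, and the
squared distance from `e i` to `α • ∑ j, e j` is `1 - 2α + dα²`. The coefficient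
`α = (1 - √(d+1))/d` is a root of `dα² - 2α - 1 = 0`, which makes that squared distance `2`.
-/

open Real RealInnerProductSpace

section Orthonormal

variable {ι E : Type*} [NormedAddCommGroup E] [InnerProductSpace ℝ E] {v : ι → E}

theorem Orthonormal.dist_eq_sqrt_two (hv : Orthonormal ℝ v) {i j : ι} (hij : i ≠ j) :
    dist (v i) (v j) = √2 := by
  rw [dist_eq_norm, ← sqrt_sq (norm_nonneg _), norm_sub_sq_real, hv.inner_eq_zero hij,
    hv.norm_eq_one, hv.norm_eq_one]
  norm_num

variable [Fintype ι]

theorem Orthonormal.inner_sum_right_eq_one (hv : Orthonormal ℝ v) (i : ι) :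
    ⟪v i, ∑ j, v j⟫ = 1 := by
  simpa using hv.inner_right_fintype (fun _ => 1) i

theorem Orthonormal.norm_sum_sq (hv : Orthonormal ℝ v) :
    ‖∑ j, v j‖ ^ 2 = Fintype.card ι := by
  rw [← real_inner_self_eq_norm_sq, sum_inner]
  simp [hv.inner_sum_right_eq_one]

theorem Orthonormal.dist_smul_sum_sq (hv : Orthonormal ℝ v) (i : ι) (a : ℝ) :
    dist (v i) (a • ∑ j, v j) ^ 2 = 1 - 2 * a + a ^ 2 * Fintype.card ι := by
  rw [dist_eq_norm, norm_sub_sq_real, inner_smul_right, norm_smul, mul_pow, hv.norm_sum_sq,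
    hv.inner_sum_right_eq_one, hv.norm_eq_one, Real.norm_eq_abs, sq_abs]
  ring

end Orthonormal

theorem one_sub_two_mul_add_sq_mul_eq_two {n : ℕ} (hn : n ≠ 0) :
    let a : ℝ := (1 - √(n + 1)) / n
    1 - 2 * a + a ^ 2 * n = 2 := by
  have hs : √(n + 1 : ℝ) ^ 2 = n + 1 := sq_sqrt (by positivity)
  have hn' : (n : ℝ) ≠ 0 := by exact_mod_cast hn
  field_simp
  linear_combination hs

theorem simplex_vertices_equidistant_general (d : ℕ)
    (e : Fin d → EuclideanSpace ℝ (Fin d))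
    (he : ∀ i, e i = EuclideanSpace.single i 1)
    (α : ℝ) (hα : α = (1 - Real.sqrt (d + 1)) / d)
    (w : Fin (d + 1) → EuclideanSpace ℝ (Fin d))
    (hw : ∀ i : Fin (d + 1),
      w i = if h : (i : ℕ) < d then e ⟨i, h⟩ else α • ∑ j : Fin d, e j) :
    ∀ i j : Fin (d + 1), i ≠ j → dist (w i) (w j) = Real.sqrt 2 := by
  have he_orth : Orthonormal ℝ e := by
    simpa [funext he] using EuclideanSpace.orthonormal_single (𝕜 := ℝ) (ι := Fin d)
  have h_apex (i : Fin d) : dist (e i) (α • ∑ j, e j) = √2 := by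
    rw [← sqrt_sq dist_nonneg, he_orth.dist_smul_sum_sq, Fintype.card_fin, hα,
      one_sub_two_mul_add_sq_mul_eq_two (Fin.pos i).ne']
  intro i j hij
  rw [hw i, hw j]
  split_ifs with hi hj hj
  · exact he_orth.dist_eq_sqrt_two (by simpa [Fin.ext_iff] using hij)
  · exact h_apex _
  · rw [dist_comm]
    exact h_apex _
  · exact absurd (Fin.ext (by omega)) hij

/-- The `d+1` vertices of the regular `d`-simplex construction (the `d`
standard basis vectors together with `α • ∑ i, e i`, `α = (1 - √(d+1))/d`)
are mutually equidistant, at distance `√2`. -/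
theorem simplex_vertices_equidistant (d : ℕ) (hd : 1 ≤ d)
    (e : Fin d → EuclideanSpace ℝ (Fin d))
    (he : ∀ i, e i = EuclideanSpace.single i 1)
    (α : ℝ) (hα : α = (1 - Real.sqrt (d + 1)) / d)
    (w : Fin (d + 1) → EuclideanSpace ℝ (Fin d))
    (hw : ∀ i : Fin (d + 1),
      w i = if h : (i : ℕ) < d then e ⟨i, h⟩ else α • ∑ j : Fin d, e j) :
    ∀ i j : Fin (d + 1), i ≠ j → dist (w i) (w j) = Real.sqrt 2 :=
  simplex_vertices_equidistant_general d e he α hα w hw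
end

section
/- Let d ≥ 1 and work in EuclideanSpace ℝ (Fin d) with standard basis vectors e_i = EuclideanSpace.single i 1. Set α = (1 − √(d+1))/d, define w : Fin (d+1) → EuclideanSpace ℝ (Fin d) by w i = e_i for i < d and w_d = α • (Σ_{i : Fin d} e_i), and let c = (1/(d+1)) • Σ_{i : Fin (d+1)} w i be the centroid. Then all centered vertices have the same norm: for all i, j : Fin (d+1), ‖w i − c‖ = ‖w j − c‖, and this common norm is positive. -/
/-! The centroid of the vertices is `β • 𝟙` with `β = (1 + α) / (d + 1)` and `𝟙 = ∑ i, e i`, so the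
squared distance to it is `1 - 2β + dβ²` from a basis vertex and `d (α - β)²` from `α • 𝟙`.
The value of `α` is a root of `d α² - 2α - 1 = 0` (so that `‖e i - α • 𝟙‖ = √2 = ‖e i - e j‖`),
and for it both expressions equal `d / (d + 1)`. -/

open Real

namespace EuclideanSpace

variable {ι : Type*} [Fintype ι] [DecidableEq ι]

theorem inner_single_one_sum_single_one (i : ι) :
    inner ℝ (single i (1 : ℝ)) (∑ j, single j 1) = 1 := by
  simp [inner_single_left]

theorem norm_sum_single_one_sq : ‖∑ j : ι, single j (1 : ℝ)‖ ^ 2 = Fintype.card ι := by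
  rw [← real_inner_self_eq_norm_sq, sum_inner]
  simp [inner_single_one_sum_single_one]

theorem norm_single_one_sub_smul_sum_single_one_sq (i : ι) (β : ℝ) :
    ‖single i (1 : ℝ) - β • ∑ j, single j 1‖ ^ 2 = 1 - 2 * β + Fintype.card ι * β ^ 2 := by
  rw [norm_sub_sq_real, inner_smul_right, inner_single_one_sum_single_one, norm_smul,
    mul_pow, norm_sum_single_one_sq, PiLp.norm_single, norm_one, Real.norm_eq_abs, sq_abs]
  ring

theorem norm_smul_sum_single_one_sub_smul_sq (α β : ℝ) :
    ‖α • ∑ j : ι, single j (1 : ℝ) - β • ∑ j, single j 1‖ ^ 2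
      = Fintype.card ι * (α - β) ^ 2 := by
  rw [← sub_smul, norm_smul, mul_pow, norm_sum_single_one_sq, Real.norm_eq_abs, sq_abs,
    mul_comm]

end EuclideanSpace

theorem simplex_centered_coeffs_norm_sq {d α : ℝ} (hd : 0 < d)
    (hα : α = (1 - √(d + 1)) / d) :
    1 - 2 * ((1 + α) / (d + 1)) + d * ((1 + α) / (d + 1)) ^ 2 = d / (d + 1) ∧
      d * (α - (1 + α) / (d + 1)) ^ 2 = d / (d + 1) := by
  have hs : √(d + 1) ^ 2 = d + 1 := sq_sqrt (by positivity)
  subst hα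
  constructor
  · field_simp
    linear_combination hs
  · field_simp
    linear_combination d ^ 2 * hs

/-- Shifting the regular `d`-simplex vertices by their centroid yields vectors
of equal positive norm. -/
theorem simplex_centered_vertices_equal_norm (d : ℕ) (hd : 1 ≤ d)
    (e : Fin d → EuclideanSpace ℝ (Fin d))
    (he : ∀ i, e i = EuclideanSpace.single i 1)
    (α : ℝ) (hα : α = (1 - Real.sqrt (d + 1)) / d)
    (w : Fin (d + 1) → EuclideanSpace ℝ (Fin d))
    (hw : ∀ i : Fin (d + 1),
      w i = if h : (i : ℕ) < d then e ⟨i, h⟩ else α • ∑ j : Fin d, e j)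
    (c : EuclideanSpace ℝ (Fin d))
    (hc : c = (1 / (d + 1) : ℝ) • ∑ i : Fin (d + 1), w i) :
    (∀ i j : Fin (d + 1), ‖w i - c‖ = ‖w j - c‖) ∧
      (∀ i : Fin (d + 1), 0 < ‖w i - c‖) := by
  have hd' : (0 : ℝ) < d := by exact_mod_cast hd
  set ones := ∑ j : Fin d, EuclideanSpace.single j (1 : ℝ)
  have hw_castSucc (j : Fin d) : w j.castSucc = EuclideanSpace.single j 1 := by simp [hw, he]
  have hw_last : w (Fin.last d) = α • ones := by simp [hw, he, ones]
  have hc' : c = ((1 + α) / (d + 1)) • ones := by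
    rw [hc, Fin.sum_univ_castSucc, hw_last]
    simp only [hw_castSucc]
    module
  obtain ⟨h_castSucc, h_last⟩ := simplex_centered_coeffs_norm_sq hd' hα
  have hnorm_sq (i : Fin (d + 1)) : ‖w i - c‖ ^ 2 = d / (d + 1) := by
    induction i using Fin.lastCases with
    | last =>
      rw [hw_last, hc', EuclideanSpace.norm_smul_sum_single_one_sub_smul_sq]
      simpa using h_last
    | cast j =>
      rw [hw_castSucc, hc', EuclideanSpace.norm_single_one_sub_smul_sum_single_one_sq]
      simpa using h_castSucc
  have hnorm (i : Fin (d + 1)) : ‖w i - c‖ = √(d / (d + 1)) := by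
    rw [← hnorm_sq i, sqrt_sq (norm_nonneg _)]
  exact ⟨fun i j => by rw [hnorm, hnorm], fun i => by rw [hnorm]; positivity⟩
end

section
/- Let d ≥ 1 and work in EuclideanSpace ℝ (Fin d) with standard basis vectors e_i = EuclideanSpace.single i 1. Set α = (1 − √(d+1))/d, define w : Fin (d+1) → EuclideanSpace ℝ (Fin d) by w i = e_i for i < d and w_d = α • (Σ_{i : Fin d} e_i), let c = (1/(d+1)) • Σ_{i : Fin (d+1)} w i, and let u i = ‖w i − c‖⁻¹ • (w i − c) be the normalized centered vertices. Then for all i ≠ j, the inner product ⟪u i, u j⟫ = −1/d; equivalently, the angle between any pair of the d-Simplex fixed-classifier weights equals arccos(−1/d). -/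
open scoped RealInnerProductSpace

/-!
Each `eᵢ` is at distance `√2` from the others, and `α` is the root of `d α² - 2 α - 1 = 0` that
puts `α • ∑ᵢ eᵢ` at distance `√2` from every `eᵢ` as well, so the `d + 1` points form a regular
simplex. For any regular simplex `x₀, …, xₙ` with edge `r` and centroid `0`, expanding
`∑ⱼ ‖xᵢ - xⱼ‖² = (n + 1) ‖xᵢ‖² + ∑ⱼ ‖xⱼ‖²` shows that all `‖xᵢ‖²` equal `n r² / (2 (n + 1))`;
polarization then gives `⟪xᵢ, xⱼ⟫ = -r² / (2 (n + 1))`, i.e. cosine `-1 / n`.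
-/

open Finset InnerProductGeometry

section RegularSimplex

variable {ι : Type*} [Fintype ι]

theorem sum_sub_card_inv_smul_sum_eq_zero {𝕜 E : Type*} [DivisionRing 𝕜] [CharZero 𝕜]
    [AddCommGroup E] [Module 𝕜 E] (v : ι → E) :
    ∑ i, (v i - (Fintype.card ι : 𝕜)⁻¹ • ∑ j, v j) = 0 := by
  rcases isEmpty_or_nonempty ι with hι | hι
  · simp
  · rw [sum_sub_distrib, sum_const, card_univ, ← Nat.cast_smul_eq_nsmul 𝕜, smul_smul,
      mul_inv_cancel₀ (Nat.cast_ne_zero.mpr Fintype.card_ne_zero), one_smul, sub_self]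

theorem sum_norm_sub_sq_of_pairwise_norm_sub {E : Type*} [SeminormedAddGroup E] {x : ι → E}
    {r : ℝ} (hr : ∀ i j, i ≠ j → ‖x i - x j‖ = r) (i : ι) :
    ∑ j, ‖x i - x j‖ ^ 2 = (Fintype.card ι - 1) * r ^ 2 := by
  classical
  have : Nonempty ι := ⟨i⟩
  rw [← sum_erase univ (f := fun j ↦ ‖x i - x j‖ ^ 2) (a := i) (by simp),
    sum_congr rfl fun j hj ↦ by rw [hr i j (ne_of_mem_erase hj).symm], sum_const,
    card_erase_of_mem (mem_univ i), card_univ, nsmul_eq_mul,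
    Nat.cast_sub Fintype.card_pos, Nat.cast_one]

variable {E : Type*} [NormedAddCommGroup E] [InnerProductSpace ℝ E] {x : ι → E} {r : ℝ}

theorem sum_norm_sub_sq_of_sum_eq_zero (hx : ∑ j, x j = 0) (i : ι) :
    ∑ j, ‖x i - x j‖ ^ 2 = Fintype.card ι * ‖x i‖ ^ 2 + ∑ j, ‖x j‖ ^ 2 := by
  simp_rw [norm_sub_sq_real]
  rw [sum_add_distrib, sum_sub_distrib, ← mul_sum, ← inner_sum, hx]
  simp

theorem two_mul_card_mul_norm_sq_of_pairwise_norm_sub (hx : ∑ j, x j = 0)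
    (hr : ∀ i j, i ≠ j → ‖x i - x j‖ = r) (i : ι) :
    2 * Fintype.card ι * ‖x i‖ ^ 2 = (Fintype.card ι - 1) * r ^ 2 := by
  set n : ℝ := (Fintype.card ι : ℝ)
  have hexpand (k : ι) : n * ‖x k‖ ^ 2 + ∑ j, ‖x j‖ ^ 2 = (n - 1) * r ^ 2 :=
    (sum_norm_sub_sq_of_sum_eq_zero hx k).symm.trans (sum_norm_sub_sq_of_pairwise_norm_sub hr k)
  have hsum : n * (2 * ∑ j, ‖x j‖ ^ 2) = n * ((n - 1) * r ^ 2) := by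
    have := sum_congr rfl fun k (_ : k ∈ univ) ↦ hexpand k
    simp only [sum_add_distrib, ← mul_sum, sum_const, card_univ, nsmul_eq_mul] at this
    linear_combination this
  have hn : n ≠ 0 := by have : Nonempty ι := ⟨i⟩; positivity
  linear_combination 2 * hexpand i - mul_left_cancel₀ hn hsum

theorem two_mul_card_mul_inner_of_pairwise_norm_sub (hx : ∑ j, x j = 0)
    (hr : ∀ i j, i ≠ j → ‖x i - x j‖ = r) {i j : ι} (hij : i ≠ j) :
    2 * Fintype.card ι * ⟪x i, x j⟫ = -r ^ 2 := by
  have hpolar := norm_sub_sq_real (x i) (x j)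
  rw [hr i j hij] at hpolar
  linear_combination (Fintype.card ι : ℝ) * hpolar +
    two_mul_card_mul_norm_sq_of_pairwise_norm_sub hx hr i / 2 +
    two_mul_card_mul_norm_sq_of_pairwise_norm_sub hx hr j / 2

theorem inner_div_norm_mul_norm_of_pairwise_norm_sub (hx : ∑ j, x j = 0)
    (hr : ∀ i j, i ≠ j → ‖x i - x j‖ = r) (hr0 : r ≠ 0) {i j : ι} (hij : i ≠ j) :
    ⟪x i, x j⟫ / (‖x i‖ * ‖x j‖) = -1 / (Fintype.card ι - 1) := by
  have hn : (1 : ℝ) < Fintype.card ι := by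
    exact_mod_cast Fintype.one_lt_card_iff.mpr ⟨i, j, hij⟩
  have hi := two_mul_card_mul_norm_sq_of_pairwise_norm_sub hx hr i
  have hj := two_mul_card_mul_norm_sq_of_pairwise_norm_sub hx hr j
  have hnorm : ‖x j‖ = ‖x i‖ := by
    refine (sq_eq_sq₀ (norm_nonneg _) (norm_nonneg _)).mp ?_
    exact mul_left_cancel₀ (by positivity) (hj.trans hi.symm)
  have hxi : ‖x i‖ ≠ 0 := by
    rintro h
    rw [h] at hi
    nlinarith [sq_pos_of_ne_zero hr0]
  rw [hnorm, div_eq_div_iff (by positivity) (by linarith)]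
  refine mul_left_cancel₀ (show 2 * (Fintype.card ι : ℝ) ≠ 0 by positivity) ?_
  linear_combination
    (Fintype.card ι - 1 : ℝ) * two_mul_card_mul_inner_of_pairwise_norm_sub hx hr hij + hi

theorem angle_normalize_normalize (x y : E) : angle (‖x‖⁻¹ • x) (‖y‖⁻¹ • y) = angle x y := by
  rcases eq_or_ne x 0 with rfl | hx
  · simp
  rcases eq_or_ne y 0 with rfl | hy
  · simp
  rw [angle_smul_left_of_pos _ _ (by positivity), angle_smul_right_of_pos _ _ (by positivity)]

theorem inner_normalize_normalize (x y : E) :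
    ⟪‖x‖⁻¹ • x, ‖y‖⁻¹ • y⟫ = ⟪x, y⟫ / (‖x‖ * ‖y‖) := by
  rw [real_inner_smul_left, real_inner_smul_right, div_eq_inv_mul, mul_inv, mul_assoc]

end RegularSimplex

theorem Orthonormal.norm_sub_smul_sum_sq {E ι : Type*} [NormedAddCommGroup E]
    [InnerProductSpace ℝ E] [Fintype ι] {e : ι → E} (he : Orthonormal ℝ e) (α : ℝ) (a : ι) :
    ‖e a - α • ∑ j, e j‖ ^ 2 = 1 - 2 * α + Fintype.card ι * α ^ 2 := by
  classical
  have h1 (b : ι) : ⟪e b, ∑ j, e j⟫ = 1 := by simp [inner_sum, orthonormal_iff_ite.mp he]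
  have h2 : ‖∑ j, e j‖ ^ 2 = Fintype.card ι := by
    rw [← real_inner_self_eq_norm_sq, sum_inner]; simp [h1]
  rw [norm_sub_sq_real, he.norm_eq_one, real_inner_smul_right, h1, norm_smul, mul_pow, h2,
    Real.norm_eq_abs, sq_abs]
  ring

theorem norm_sub_eq_sqrt_two_of_orthonormal {E : Type*} [NormedAddCommGroup E]
    [InnerProductSpace ℝ E] {d : ℕ} {e : Fin d → E} (he : Orthonormal ℝ e) {α : ℝ}
    (hα : d * α ^ 2 = 2 * α + 1) {w : Fin (d + 1) → E}
    (hw : ∀ i : Fin (d + 1), w i = if h : (i : ℕ) < d then e ⟨i, h⟩ else α • ∑ j, e j)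
    {i j : Fin (d + 1)} (hij : i ≠ j) : ‖w i - w j‖ = √2 := by
  have hw_castSucc (a : Fin d) : w a.castSucc = e a := by simp [hw]
  have hw_last : w (Fin.last d) = α • ∑ j, e j := by simp [hw]
  have h_apex (a : Fin d) : ‖e a - α • ∑ j, e j‖ = √2 := by
    rw [← Real.sqrt_sq (norm_nonneg _), he.norm_sub_smul_sum_sq, Fintype.card_fin]
    congr 1
    linarith
  rcases Fin.eq_castSucc_or_eq_last i with ⟨a, rfl⟩ | rfl <;>
    rcases Fin.eq_castSucc_or_eq_last j with ⟨b, rfl⟩ | rfl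
  · have hab : a ≠ b := fun h ↦ hij (congrArg Fin.castSucc h)
    rw [hw_castSucc, hw_castSucc, ← Real.sqrt_sq (norm_nonneg _), norm_sub_sq_real,
      he.norm_eq_one, he.norm_eq_one, he.inner_eq_zero hab]
    norm_num
  · rw [hw_castSucc, hw_last, h_apex]
  · rw [norm_sub_rev, hw_castSucc, hw_last, h_apex]
  · exact absurd rfl hij

/-- The normalized centered vertices of the regular `d`-simplex (the
`d`-Simplex fixed-classifier weights) have pairwise inner product `-1/d`;
equivalently, the angle between any pair of weights is `arccos (-1/d)`. -/
theorem simplex_classifier_angle (d : ℕ) (hd : 1 ≤ d)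
    (e : Fin d → EuclideanSpace ℝ (Fin d))
    (he : ∀ i, e i = EuclideanSpace.single i 1)
    (α : ℝ) (hα : α = (1 - Real.sqrt (d + 1)) / d)
    (w : Fin (d + 1) → EuclideanSpace ℝ (Fin d))
    (hw : ∀ i : Fin (d + 1),
      w i = if h : (i : ℕ) < d then e ⟨i, h⟩ else α • ∑ j : Fin d, e j)
    (c : EuclideanSpace ℝ (Fin d))
    (hc : c = (1 / (d + 1) : ℝ) • ∑ i : Fin (d + 1), w i)
    (u : Fin (d + 1) → EuclideanSpace ℝ (Fin d))
    (hu : ∀ i, u i = ‖w i - c‖⁻¹ • (w i - c)) :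
    ∀ i j : Fin (d + 1), i ≠ j →
      ⟪u i, u j⟫ = -1 / d ∧
      InnerProductGeometry.angle (u i) (u j) = Real.arccos (-1 / d) := by
  intro i j hij
  have he_orth : Orthonormal ℝ e := by
    rw [funext he]
    exact EuclideanSpace.orthonormal_single
  have hα_root : (d : ℝ) * α ^ 2 = 2 * α + 1 := by
    have hd0 : (d : ℝ) ≠ 0 := Nat.cast_ne_zero.mpr (by omega)
    rw [hα]
    field_simp
    linear_combination Real.sq_sqrt (show (0 : ℝ) ≤ d + 1 by positivity)
  have hcentered : ∑ k, (w k - c) = 0 := by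
    simpa [hc] using sum_sub_card_inv_smul_sum_eq_zero (𝕜 := ℝ) w
  have hedge : ∀ k l, k ≠ l → ‖(w k - c) - (w l - c)‖ = √2 := fun k l hkl ↦ by
    rw [sub_sub_sub_cancel_right]
    exact norm_sub_eq_sqrt_two_of_orthonormal he_orth hα_root hw hkl
  have hcos := inner_div_norm_mul_norm_of_pairwise_norm_sub hcentered hedge (by positivity) hij
  rw [Fintype.card_fin, Nat.cast_add_one, add_sub_cancel_right] at hcos
  rw [hu, hu, inner_normalize_normalize, angle_normalize_normalize, angle, hcos]
  exact ⟨rfl, rfl⟩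
end

section
/- Let d ≥ 1 and work in EuclideanSpace ℝ (Fin d) with standard basis vectors e_i = EuclideanSpace.single i 1. With w the regular d-simplex vertices (w i = e_i for i < d, w_d = α • Σ_i e_i, α = (1 − √(d+1))/d), centroid c = (1/(d+1)) • Σ_i w i, and normalized centered vertices u i = ‖w i − c‖⁻¹ • (w i − c), the configuration is balanced: Σ_{i : Fin (d+1)} u i = 0. -/
/-!
Centering at the centroid makes the vertices sum to zero. The centroid is `c = β 𝟙` with
`𝟙 = ∑ j, e j` and `β = (1 + α) / (d + 1)`, and `α` is a root of `d α² = 2 α + 1`, which is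
what makes all centered vertices `e_k - c` and `α 𝟙 - c` have the same length. Normalizing therefore rescales the vanishing sum by one
common scalar.
-/

open Finset

theorem sum_sub_smul_sum_eq_zero {E : Type*} [AddCommGroup E] [Module ℝ E] {ι : Type*}
    [Fintype ι] [Nonempty ι] (v : ι → E) :
    ∑ i, (v i - (Fintype.card ι : ℝ)⁻¹ • ∑ j, v j) = 0 := by
  rw [sum_sub_distrib, sum_const, card_univ, ← Nat.cast_smul_eq_nsmul ℝ, smul_smul,
    mul_inv_cancel₀ (by positivity), one_smul, sub_self]

theorem sum_inv_norm_smul_eq_zero {E : Type*} [SeminormedAddCommGroup E] [NormedSpace ℝ E]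
    {ι : Type*} [Fintype ι] {v : ι → E} {r : ℝ} (hr : ∀ i, ‖v i‖ = r) (hv : ∑ i, v i = 0) :
    ∑ i, ‖v i‖⁻¹ • v i = 0 := by
  simp_rw [hr, ← smul_sum, hv, smul_zero]

section AllOnes

variable {d : ℕ}

theorem sum_single_one_apply (k : Fin d) : (∑ j, EuclideanSpace.single j (1 : ℝ)) k = 1 := by
  simp

theorem norm_sq_smul_sum_single_one (γ : ℝ) :
    ‖γ • ∑ j : Fin d, EuclideanSpace.single j (1 : ℝ)‖ ^ 2 = d * γ ^ 2 := by
  simp [EuclideanSpace.real_norm_sq_eq]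

theorem norm_sq_single_one_sub_smul_sum_single_one (k : Fin d) (β : ℝ) :
    ‖EuclideanSpace.single k (1 : ℝ) - β • ∑ j, EuclideanSpace.single j (1 : ℝ)‖ ^ 2
      = 1 - 2 * β + d * β ^ 2 := by
  rw [norm_sub_sq_real, norm_sq_smul_sum_single_one, inner_smul_right,
    EuclideanSpace.inner_single_left, sum_single_one_apply]
  simp

end AllOnes

theorem mul_sq_eq_two_mul_add_one {d s : ℝ} (hd : d ≠ 0) (hs : s ^ 2 = d + 1) :
    d * ((1 - s) / d) ^ 2 = 2 * ((1 - s) / d) + 1 := by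
  field_simp
  linear_combination hs

/-- The two sides are `‖e_k - β 𝟙‖²` and `‖α 𝟙 - β 𝟙‖²`. -/
theorem one_sub_two_mul_add_mul_sq_eq {d α β : ℝ} (hd : d + 1 ≠ 0)
    (hα : d * α ^ 2 = 2 * α + 1) (hβ : β = (1 + α) / (d + 1)) :
    1 - 2 * β + d * β ^ 2 = d * (α - β) ^ 2 := by
  subst hβ
  field_simp
  linear_combination (1 - d ^ 2) * hα

/-- The normalized centered vertices of the regular `d`-simplex (the
`d`-Simplex fixed-classifier weights) sum to zero: the configuration is
balanced. -/
theorem simplex_classifier_balanced (d : ℕ) (hd : 1 ≤ d)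
    (e : Fin d → EuclideanSpace ℝ (Fin d))
    (he : ∀ i, e i = EuclideanSpace.single i 1)
    (α : ℝ) (hα : α = (1 - Real.sqrt (d + 1)) / d)
    (w : Fin (d + 1) → EuclideanSpace ℝ (Fin d))
    (hw : ∀ i : Fin (d + 1),
      w i = if h : (i : ℕ) < d then e ⟨i, h⟩ else α • ∑ j : Fin d, e j)
    (c : EuclideanSpace ℝ (Fin d))
    (hc : c = (1 / (d + 1) : ℝ) • ∑ i : Fin (d + 1), w i)
    (u : Fin (d + 1) → EuclideanSpace ℝ (Fin d))
    (hu : ∀ i, u i = ‖w i - c‖⁻¹ • (w i - c)) :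
    ∑ i : Fin (d + 1), u i = 0 := by
  obtain rfl : e = fun i => EuclideanSpace.single i 1 := funext he
  have hw_castSucc (k : Fin d) : w k.castSucc = EuclideanSpace.single k 1 := by simp [hw]
  have hw_last : w (Fin.last d) = α • ∑ j : Fin d, EuclideanSpace.single j (1 : ℝ) := by
    simp [hw]
  have hα_sq : (d : ℝ) * α ^ 2 = 2 * α + 1 := hα ▸ mul_sq_eq_two_mul_add_one
    (Nat.cast_ne_zero.mpr (Nat.one_le_iff_ne_zero.mp hd)) (Real.sq_sqrt (by positivity))
  set β : ℝ := (1 + α) / (d + 1) with hβ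
  have hc_eq : c = β • ∑ j : Fin d, EuclideanSpace.single j (1 : ℝ) := by
    rw [hc, Fin.sum_univ_castSucc, hw_last, sum_congr rfl fun k _ => hw_castSucc k, hβ]
    module
  have hnorm_last_sq : ‖w (Fin.last d) - c‖ ^ 2 = d * (α - β) ^ 2 := by
    rw [hw_last, hc_eq, ← sub_smul, norm_sq_smul_sum_single_one]
  have hnorm (i : Fin (d + 1)) : ‖w i - c‖ = ‖w (Fin.last d) - c‖ := by
    rw [← sq_eq_sq₀ (norm_nonneg _) (norm_nonneg _), hnorm_last_sq]
    obtain ⟨k, rfl⟩ | rfl := Fin.eq_castSucc_or_eq_last i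
    · rw [hw_castSucc, hc_eq, norm_sq_single_one_sub_smul_sum_single_one]
      exact one_sub_two_mul_add_mul_sq_eq (by positivity) hα_sq hβ
    · exact hnorm_last_sq
  have hcentered : ∑ i, (w i - c) = 0 := by
    simpa [hc] using sum_sub_smul_sum_eq_zero w
  simp_rw [hu]
  exact sum_inv_norm_smul_eq_zero hnorm hcentered
end

section
/- In EuclideanSpace ℝ (Fin d), any finite set of points that are pairwise at the same positive distance r from each other has cardinality at most d + 1. That is, if S is a finite set of points in d-dimensional Euclidean space with dist x y = r > 0 for all distinct x, y ∈ S, then |S| ≤ d + 1. -/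
open RealInnerProductSpace
/-- In `d`-dimensional Euclidean space, a finite set of points that are
pairwise at the same positive distance `r` has at most `d + 1` elements. -/
theorem equidistant_set_card_le (d : ℕ)
    (S : Finset (EuclideanSpace ℝ (Fin d))) (r : ℝ) (hr : 0 < r)
    (h : ∀ x ∈ S, ∀ y ∈ S, x ≠ y → dist x y = r) :
    S.card ≤ d + 1 := by
  classical
  rcases S.eq_empty_or_nonempty with rfl | ⟨x₀, hx₀⟩
  · simp
  set T : Finset (EuclideanSpace ℝ (Fin d)) := S.erase x₀ with hT
  -- inner products of the difference vectors
  have key : ∀ x ∈ T, ∀ y ∈ T,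
      ⟪x - x₀, y - x₀⟫ = if x = y then r ^ 2 else r ^ 2 / 2 := by
    intro x hx y hy
    have hxS := Finset.mem_of_mem_erase hx
    have hyS := Finset.mem_of_mem_erase hy
    have hx0 : dist x x₀ = r := h x hxS x₀ hx₀ (Finset.ne_of_mem_erase hx)
    have hy0 : dist y x₀ = r := h y hyS x₀ hx₀ (Finset.ne_of_mem_erase hy)
    have e1 : ‖x - x₀‖ = r := by rwa [← dist_eq_norm]
    have e2 : ‖y - x₀‖ = r := by rwa [← dist_eq_norm]
    by_cases hxy : x = y
    · subst hxy
      rw [if_pos rfl, real_inner_self_eq_norm_sq, e1]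
    · have hxyd : dist x y = r := h x hxS y hyS hxy
      have e3 : ‖(x - x₀) - (y - x₀)‖ = r := by
        have hxy' : (x - x₀) - (y - x₀) = x - y := by abel
        rw [hxy', ← dist_eq_norm]; exact hxyd
      have hns := norm_sub_sq_real (x - x₀) (y - x₀)
      rw [e1, e2, e3, if_neg hxy] at *
      linarith
  -- the difference vectors are linearly independent
  have lin : LinearIndependent ℝ (fun i : T => (i : EuclideanSpace ℝ (Fin d)) - x₀) := by
    rw [Fintype.linearIndependent_iff]
    intro g hg
    have hsum : ⟪∑ i : T, g i • ((i : EuclideanSpace ℝ (Fin d)) - x₀), ∑ i : T, g i • ((i : EuclideanSpace ℝ (Fin d)) - x₀)⟫ = 0 := by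
      rw [hg]; simp
    rw [sum_inner] at hsum
    simp_rw [inner_sum, real_inner_smul_left, real_inner_smul_right] at hsum
    have expand : ∀ i : T, ∀ j : T, g i * (g j * ⟪(i : EuclideanSpace ℝ (Fin d)) - x₀, (j : EuclideanSpace ℝ (Fin d)) - x₀⟫)
        = g i * g j * (r ^ 2 / 2) + (if i = j then g i * g j * (r ^ 2 / 2) else 0) := by
      intro i j
      rw [key i i.2 j j.2]
      by_cases hij : i = j
      · subst hij; rw [if_pos rfl, if_pos rfl]; ring
      · have : (i : EuclideanSpace ℝ (Fin d)) ≠ (j : EuclideanSpace ℝ (Fin d)) := fun hc => hij (Subtype.ext hc)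
        rw [if_neg this, if_neg hij]; ring
    simp_rw [expand, Finset.sum_add_distrib, Finset.sum_ite_eq,
      Finset.mem_univ, if_true] at hsum
    have h1 : ∑ i : T, ∑ j : T, g i * g j * (r ^ 2 / 2)
        = (∑ i : T, g i) ^ 2 * (r ^ 2 / 2) := by
      rw [pow_two (∑ i : T, g i), Finset.sum_mul_sum, Finset.sum_mul]
      apply Finset.sum_congr rfl
      intro i _
      rw [Finset.sum_mul]
    rw [h1] at hsum
    have h2 : ∑ i : T, g i * g i * (r ^ 2 / 2) = (∑ i : T, g i ^ 2) * (r ^ 2 / 2) := by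
      rw [Finset.sum_mul]
      apply Finset.sum_congr rfl
      intro i _
      ring
    rw [h2] at hsum
    have hr2 : 0 < r ^ 2 / 2 := by positivity
    have hzero : (∑ i : T, g i) ^ 2 + ∑ i : T, g i ^ 2 = 0 := by
      have : ((∑ i : T, g i) ^ 2 + ∑ i : T, g i ^ 2) * (r ^ 2 / 2) = 0 := by linarith
      exact (mul_eq_zero.mp this).resolve_right (ne_of_gt hr2)
    have hs1 : 0 ≤ (∑ i : T, g i) ^ 2 := sq_nonneg _
    have hs2 : 0 ≤ ∑ i : T, g i ^ 2 := Finset.sum_nonneg fun i _ => sq_nonneg _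
    have hsq : ∑ i : T, g i ^ 2 = 0 := by linarith
    intro i
    have := (Finset.sum_eq_zero_iff_of_nonneg fun j _ => sq_nonneg (g j)).mp hsq i
      (Finset.mem_univ i)
    exact (pow_eq_zero_iff two_ne_zero).mp this
  -- conclude
  have hcard : T.card ≤ d := by
    have := lin.fintype_card_le_finrank
    rwa [Fintype.card_coe, finrank_euclideanSpace_fin] at this
  have : S.card = T.card + 1 := (Finset.card_erase_add_one hx₀).symm
  omega
end
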